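/- Assume f satisfies MM, k ≤ −b₂, μ(W) = 0, and μ([x₁,b₁] × [a₂,x₂]) ≥ 0 for every (x₁,x₂) ∈ W. Then ∫_W u dμ ≤ 0 for every continuous convex function u : X → ℝ that is nonincreasing in the first coordinate and nondecreasing in the second coordinate. -/

import Mathlib

open MeasureTheory Set

noncomputable section

/-- The type rectangle `X = [a₁,b₁] × [a₂,b₂] ⊆ ℝ²`. -/
def rect (a₁ b₁ a₂ b₂ : ℝ) : Set (ℝ × ℝ) := Icc a₁ b₁ ×ˢ Icc a₂ b₂

/-- First partial derivative `∂₁f(x)`. -/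
def d1 (f : ℝ × ℝ → ℝ) (x : ℝ × ℝ) : ℝ := deriv (fun s => f (s, x.2)) x.1

/-- Second partial derivative `∂₂f(x)`. -/
def d2 (f : ℝ × ℝ → ℝ) (x : ℝ × ℝ) : ℝ := deriv (fun s => f (x.1, s)) x.2

/-- The interior density of the transformed measure `μ`:
`x₁·∂₁f(x) + (x₂+k)·∂₂f(x) + 3·f(x)`. -/
def dens (k : ℝ) (f : ℝ × ℝ → ℝ) (x : ℝ × ℝ) : ℝ :=
  x.1 * d1 f x + (x.2 + k) * d2 f x + 3 * f x

/-- The integral `∫ g dμ` of a function `g` against the transformed measure `μ` on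
`X = [a₁,b₁] × [a₂,b₂]` with constant third-party payment `k`: a unit atom at the
lower-left corner `x̲ = (a₁,a₂)`, signed line densities on the four edges of `X`, and
(negated) interior density `dens k f` against two-dimensional Lebesgue measure. -/
def muInt (a₁ b₁ a₂ b₂ k : ℝ) (f g : ℝ × ℝ → ℝ) : ℝ :=
  g (a₁, a₂)
    - (a₂ + k) * ∫ s in a₁..b₁, g (s, a₂) * f (s, a₂)
    + (b₂ + k) * ∫ s in a₁..b₁, g (s, b₂) * f (s, b₂)
    + b₁ * ∫ s in a₂..b₂, g (b₁, s) * f (b₁, s)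
    - a₁ * ∫ s in a₂..b₂, g (a₁, s) * f (a₁, s)
    - ∫ x in rect a₁ b₁ a₂ b₂, g x * dens k f x

/-- `μ(A)` for a set `A ⊆ X`, obtained by integrating the indicator of `A` against `μ`. -/
def muSet (a₁ b₁ a₂ b₂ k : ℝ) (f : ℝ × ℝ → ℝ) (A : Set (ℝ × ℝ)) : ℝ :=
  muInt a₁ b₁ a₂ b₂ k f (A.indicator 1)

/-- `u` is nondecreasing in the first coordinate on `X`. -/
def IncAlong1 (X : Set (ℝ × ℝ)) (u : ℝ × ℝ → ℝ) : Prop :=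
  ∀ s s' t : ℝ, (s, t) ∈ X → (s', t) ∈ X → s ≤ s' → u (s, t) ≤ u (s', t)

/-- `u` is nondecreasing in the second coordinate on `X`. -/
def IncAlong2 (X : Set (ℝ × ℝ)) (u : ℝ × ℝ → ℝ) : Prop :=
  ∀ s t t' : ℝ, (s, t) ∈ X → (s, t') ∈ X → t ≤ t' → u (s, t) ≤ u (s, t')

/-- `u` is nonincreasing in the first coordinate on `X`. -/
def DecAlong1 (X : Set (ℝ × ℝ)) (u : ℝ × ℝ → ℝ) : Prop :=
  ∀ s s' t : ℝ, (s, t) ∈ X → (s', t) ∈ X → s ≤ s' → u (s', t) ≤ u (s, t)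

/-- `u` is nonincreasing in the second coordinate on `X`. -/
def DecAlong2 (X : Set (ℝ × ℝ)) (u : ℝ × ℝ → ℝ) : Prop :=
  ∀ s t t' : ℝ, (s, t) ∈ X → (s, t') ∈ X → t ≤ t' → u (s, t') ≤ u (s, t)

/-- The feasible class `𝒰`: continuous, convex, nondecreasing in each coordinate,
and 1-Lipschitz with respect to the `ℓ¹` norm, on `X`. -/
def FeasibleU (X : Set (ℝ × ℝ)) (u : ℝ × ℝ → ℝ) : Prop :=
  ContinuousOn u X ∧ ConvexOn ℝ X u ∧ IncAlong1 X u ∧ IncAlong2 X u ∧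
    ∀ x ∈ X, ∀ y ∈ X, |u x - u y| ≤ |x.1 - y.1| + |x.2 - y.2|

end

noncomputable section
/-- Region of types buying nothing under the Good-Only Posted Price at `p`. -/
def Zgo (a₁ b₁ a₂ b₂ p : ℝ) : Set (ℝ × ℝ) := {x ∈ rect a₁ b₁ a₂ b₂ | x.1 ≤ p}

/-- Region of types buying the good under the Good-Only Posted Price at `p`. -/
def Wgo (a₁ b₁ a₂ b₂ p : ℝ) : Set (ℝ × ℝ) := {x ∈ rect a₁ b₁ a₂ b₂ | p < x.1}

/-- The marginal cumulative measure `M(s) = μ([a₁,s] × [a₂,b₂])`. -/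
def Mgo (a₁ b₁ a₂ b₂ k : ℝ) (f : ℝ × ℝ → ℝ) (s : ℝ) : ℝ :=
  muSet a₁ b₁ a₂ b₂ k f (Icc a₁ s ×ˢ Icc a₂ b₂)

end

/-!
Put `c = u(p, b₂)` and `g = c - u`, which is nonnegative on `W`. Since `μ(W) = 0`,
`∫_W u dμ = -∫_W g dμ`, so it suffices to show `∫_W g dμ ≥ 0`. As `g` grows to the right and
downwards, each superlevel set `K = {x ∈ W | g x > t}` is a lower-right set of `X`, and the uniform
approximation of `g` by `(1/n) ∑ᵢ 1_{g > i/n}` reduces the claim to `μ(K) ≥ 0`. Enclose `K` in the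
orthant `O = [inf x₁, b₁] × [a₂, sup x₂]`: `μ(O) ≥ 0` by hypothesis (in the limit of thin strips
when `inf x₁ = p`), while `O \ K` misses the atom and the left edge and meets the bottom and right
edges in one point each; its mass therefore sits on the top edge and in the interior, where
`k ≤ -b₂` and (MM) make it nonpositive. Hence `μ(K) = μ(O) - μ(O \ K) ≥ 0`.
-/

open Finset in
theorem card_filter_div_lt_eq_ceil {n L : ℕ} (hn : 0 < n) {y : ℝ} (hy : n * y ≤ L) :
    #{i ∈ Finset.range L | ((i : ℕ) : ℝ) / n < y} = ⌈n * y⌉₊ := by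
  have hn' : (0 : ℝ) < n := Nat.cast_pos.2 hn
  suffices {i ∈ Finset.range L | ((i : ℕ) : ℝ) / n < y} = Finset.range ⌈n * y⌉₊ by
    rw [this, Finset.card_range]
  ext i
  simp only [mem_filter, Finset.mem_range, Nat.lt_ceil, div_lt_iff₀ hn', mul_comm y]
  exact ⟨And.right, fun h => ⟨by exact_mod_cast h.trans_le hy, h⟩⟩

open Finset in
theorem abs_sub_sum_indicator_superlevel_le {α : Type*} {g : α → ℝ} {n m : ℕ} (hn : 0 < n)
    {x : α} (hx : g x ∈ Icc (0 : ℝ) m) :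
    |g x - (n : ℝ)⁻¹ * ∑ i ∈ Finset.range (n * m), {y | (i : ℝ) / n < g y}.indicator 1 x|
      ≤ (n : ℝ)⁻¹ := by
  have hn' : (0 : ℝ) < n := Nat.cast_pos.2 hn
  have hsum : ∑ i ∈ Finset.range (n * m), {y | (i : ℝ) / n < g y}.indicator (1 : α → ℝ) x
      = ⌈n * g x⌉₊ := by
    simp only [indicator_apply, mem_ofPred_eq, Pi.one_apply]
    rw [sum_boole, card_filter_div_lt_eq_ceil hn (by
      push_cast; exact mul_le_mul_of_nonneg_left hx.2 hn'.le)]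
  have hle : (n : ℝ) * g x ≤ ⌈n * g x⌉₊ := Nat.le_ceil _
  have hlt : (⌈n * g x⌉₊ : ℝ) < n * g x + 1 := Nat.ceil_lt_add_one (by nlinarith [hx.1])
  rw [hsum, abs_le]
  constructor <;>
  · rw [← mul_le_mul_iff_of_pos_left hn']
    field_simp
    nlinarith

open Filter Topology in
theorem LinearMap.nonneg_of_superlevelSet_nonneg {α : Type*} {S : Submodule ℝ (α → ℝ)}
    (Λ : S →ₗ[ℝ] ℝ) {E : ℝ} (hΛ : ∀ φ : S, ∀ ε, (∀ x, |(φ : α → ℝ) x| ≤ ε) → |Λ φ| ≤ E * ε)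
    (g : S) {M : ℝ} (hg : ∀ x, (g : α → ℝ) x ∈ Icc 0 M)
    (hmem : ∀ t, {x | t < (g : α → ℝ) x}.indicator 1 ∈ S)
    (hlevel : ∀ t, 0 ≤ t → 0 ≤ Λ ⟨_, hmem t⟩) : 0 ≤ Λ g := by
  set m := ⌈M⌉₊
  let step (n : ℕ) : S :=
    (n : ℝ)⁻¹ • ∑ i ∈ Finset.range (n * m), ⟨_, hmem ((i : ℝ) / n)⟩
  have hstep_nonneg (n : ℕ) : 0 ≤ Λ (step n) := by
    simp only [step, map_smul, map_sum, smul_eq_mul]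
    exact mul_nonneg (by positivity) (Finset.sum_nonneg fun i _ => hlevel _ (by positivity))
  have hstep_approx (n : ℕ) (hn : 0 < n) (x : α) : |((g - step n : S) : α → ℝ) x| ≤ (n : ℝ)⁻¹ := by
    have hx : (g : α → ℝ) x ∈ Icc (0 : ℝ) m := ⟨(hg x).1, (hg x).2.trans (Nat.le_ceil M)⟩
    simpa [step] using abs_sub_sum_indicator_superlevel_le hn hx
  have hlower (n : ℕ) : -(E * (1 / ((n : ℝ) + 1))) ≤ Λ g := by
    have hn : 0 < n + 1 := n.succ_pos
    have hbound := abs_le.1 (hΛ _ _ (hstep_approx (n + 1) hn))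
    have hsplit : Λ g = Λ (step (n + 1)) + Λ (g - step (n + 1)) := by
      rw [← map_add, add_sub_cancel]
    push_cast at hbound
    rw [one_div]
    linarith [hstep_nonneg (n + 1)]
  have hlim : Tendsto (fun n : ℕ => -(E * (1 / ((n : ℝ) + 1)))) atTop (𝓝 0) := by
    simpa using (tendsto_one_div_add_atTop_nhds_zero_nat.const_mul E).neg
  exact le_of_tendsto' hlim hlower

theorem abs_setIntegral_mul_le {α : Type*} [MeasurableSpace α] {ν : Measure α} {R A : Set α}
    {φ w : α → ℝ} {ε C : ℝ} (hR : MeasurableSet R) (hfin : ν (R ∩ A) < ⊤)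
    (hφ : ∀ x ∈ R, |φ x| ≤ ε) (hφA : ∀ x ∈ R, x ∉ A → φ x = 0) (hw : ∀ x ∈ R, |w x| ≤ C) :
    |∫ x in R, φ x * w x ∂ν| ≤ ε * C * ν.real (R ∩ A) := by
  rw [setIntegral_eq_of_subset_of_forall_sdiff_eq_zero (f := fun x => φ x * w x) hR
    inter_subset_left fun x hx => by rw [hφA x hx.1 fun h => hx.2 ⟨hx.1, h⟩, zero_mul],
    ← Real.norm_eq_abs]
  refine norm_setIntegral_le_of_norm_le_const hfin fun x hx => ?_
  rw [Real.norm_eq_abs, abs_mul]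
  exact mul_le_mul (hφ x hx.1) (hw x hx.1) (abs_nonneg _) ((abs_nonneg _).trans (hφ x hx.1))

theorem abs_intervalIntegral_mul_le {a b : ℝ} (hab : a ≤ b) {A : Set ℝ} {φ w : ℝ → ℝ} {ε C : ℝ}
    (hφ : ∀ x ∈ Ioc a b, |φ x| ≤ ε) (hφA : ∀ x ∈ Ioc a b, x ∉ A → φ x = 0)
    (hw : ∀ x ∈ Ioc a b, |w x| ≤ C) :
    |∫ x in a..b, φ x * w x| ≤ ε * C * volume.real (Ioc a b ∩ A) := by
  rw [intervalIntegral.integral_of_le hab]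
  exact abs_setIntegral_mul_le measurableSet_Ioc
    ((measure_mono inter_subset_left).trans_lt measure_Ioc_lt_top) hφ hφA hw

theorem integrableOn_indicator_mul {α : Type*} [MeasurableSpace α] [TopologicalSpace α]
    [OpensMeasurableSpace α] [T2Space α] {μ : Measure α} [IsFiniteMeasureOnCompacts μ]
    {K A : Set α} (hK : IsCompact K) (hA : MeasurableSet A) {ψ w : α → ℝ}
    (hψ : ContinuousOn ψ K) (hw : ContinuousOn w K) :
    IntegrableOn (fun x => A.indicator ψ x * w x) K μ := by
  simp_rw [← indicator_mul_left]
  exact ((hψ.mul hw).integrableOn_compact hK).indicator hA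

theorem abs_indicator_one_le {α : Type*} (S : Set α) (x : α) : |S.indicator (1 : α → ℝ) x| ≤ 1 := by
  by_cases hx : x ∈ S <;> simp [hx]

theorem abs_add_mul_le {x c y ε M : ℝ} (hx : |x| ≤ ε) (hy : |y| ≤ M * ε) :
    |x + c * y| ≤ (1 + |c| * M) * ε :=
  calc |x + c * y| ≤ |x| + |c| * |y| := (abs_add_le _ _).trans_eq (by rw [abs_mul])
    _ ≤ ε + |c| * (M * ε) := by gcongr
    _ = (1 + |c| * M) * ε := by ring

theorem abs_sub_mul_le {x c y ε M : ℝ} (hx : |x| ≤ ε) (hy : |y| ≤ M * ε) :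
    |x - c * y| ≤ (1 + |c| * M) * ε := by
  simpa [sub_eq_add_neg, ← neg_mul] using abs_add_mul_le (c := -c) hx hy

theorem exists_bound_rect {a₁ b₁ a₂ b₂ : ℝ} (h₁ : a₁ ≤ b₁) (h₂ : a₂ ≤ b₂) {w : ℝ × ℝ → ℝ}
    (hw : ContinuousOn w (rect a₁ b₁ a₂ b₂)) : ∃ C, 0 ≤ C ∧ ∀ x ∈ rect a₁ b₁ a₂ b₂, |w x| ≤ C := by
  obtain ⟨C, hC⟩ := (isCompact_Icc.prod isCompact_Icc).exists_bound_of_continuousOn hw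
  exact ⟨C, (norm_nonneg _).trans (hC (a₁, a₂) ⟨⟨le_rfl, h₁⟩, le_rfl, h₂⟩), hC⟩

theorem d1_eq_fderiv {f : ℝ × ℝ → ℝ} {x : ℝ × ℝ} (hf : DifferentiableAt ℝ f x) :
    d1 f x = fderiv ℝ f x (1, 0) :=
  (hf.hasFDerivAt.comp_hasDerivAt x.1
    ((hasDerivAt_id x.1).prodMk (hasDerivAt_const x.1 x.2))).deriv

theorem d2_eq_fderiv {f : ℝ × ℝ → ℝ} {x : ℝ × ℝ} (hf : DifferentiableAt ℝ f x) :
    d2 f x = fderiv ℝ f x (0, 1) :=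
  (hf.hasFDerivAt.comp_hasDerivAt x.2
    ((hasDerivAt_const x.2 x.1).prodMk (hasDerivAt_id x.2))).deriv

theorem continuousOn_dens {U : Set (ℝ × ℝ)} (hU : IsOpen U) {f : ℝ × ℝ → ℝ}
    (hf : ContDiffOn ℝ 1 f U) (k : ℝ) : ContinuousOn (dens k f) U := by
  have hdiff {x} (hx : x ∈ U) : DifferentiableAt ℝ f x :=
    (hf.differentiableOn one_ne_zero x hx).differentiableAt (hU.mem_nhds hx)
  have hfd := hf.continuousOn_fderiv_of_isOpen hU le_rfl
  have hd1 : ContinuousOn (d1 f) U :=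
    (hfd.clm_apply continuousOn_const).congr fun x hx => d1_eq_fderiv (hdiff hx)
  have hd2 : ContinuousOn (d2 f) U :=
    (hfd.clm_apply continuousOn_const).congr fun x hx => d2_eq_fderiv (hdiff hx)
  exact ((continuous_fst.continuousOn.mul hd1).add
    ((continuous_snd.continuousOn.add continuousOn_const).mul hd2)).add
    (continuousOn_const.mul hf.continuousOn)

theorem measurableSet_Wgo (a₁ b₁ a₂ b₂ p : ℝ) : MeasurableSet (Wgo a₁ b₁ a₂ b₂ p) :=
  (measurableSet_Icc.prod measurableSet_Icc).inter
    (measurableSet_lt measurable_const measurable_fst)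

def IsLowerRightIn (X K : Set (ℝ × ℝ)) : Prop :=
  ∀ ⦃x y : ℝ × ℝ⦄, x ∈ K → y ∈ X → x.1 ≤ y.1 → y.2 ≤ x.2 → y ∈ K

theorem isLowerRightIn_sublevel {a₁ b₁ a₂ b₂ : ℝ} {u : ℝ × ℝ → ℝ}
    (hu₁ : DecAlong1 (rect a₁ b₁ a₂ b₂) u) (hu₂ : IncAlong2 (rect a₁ b₁ a₂ b₂) u) (p r : ℝ) :
    IsLowerRightIn (rect a₁ b₁ a₂ b₂) {x ∈ Wgo a₁ b₁ a₂ b₂ p | u x < r} := by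
  rintro x y ⟨⟨hxX, hpx⟩, hux⟩ hyX hxy₁ hyx₂
  have hmid : (y.1, x.2) ∈ rect a₁ b₁ a₂ b₂ := ⟨hyX.1, hxX.2⟩
  exact ⟨⟨hyX, hpx.trans_le hxy₁⟩,
    ((hu₂ y.1 y.2 x.2 hyX hmid hyx₂).trans (hu₁ x.1 y.1 x.2 hxX hmid hxy₁)).trans_lt hux⟩

section LowerRight

variable {a₁ b₁ a₂ b₂ : ℝ} {K : Set (ℝ × ℝ)}

theorem subset_Icc_sInf_prod_Icc_sSup (hKX : K ⊆ rect a₁ b₁ a₂ b₂) :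
    K ⊆ Icc (sInf (Prod.fst '' K)) b₁ ×ˢ Icc a₂ (sSup (Prod.snd '' K)) := fun x hx =>
  ⟨⟨csInf_le ⟨a₁, by rintro _ ⟨y, hy, rfl⟩; exact (hKX hy).1.1⟩ (mem_image_of_mem _ hx),
      (hKX hx).1.2⟩,
    (hKX hx).2.1,
    le_csSup ⟨b₂, by rintro _ ⟨y, hy, rfl⟩; exact (hKX hy).2.2⟩ (mem_image_of_mem _ hx)⟩

theorem IsLowerRightIn.mk_mem_of_sInf_lt (hK : IsLowerRightIn (rect a₁ b₁ a₂ b₂) K)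
    (hKX : K ⊆ rect a₁ b₁ a₂ b₂) (hne : K.Nonempty) (h₂ : a₂ ≤ b₂) {s : ℝ}
    (hs : sInf (Prod.fst '' K) < s) (hsb : s ≤ b₁) : (s, a₂) ∈ K := by
  obtain ⟨_, ⟨x, hx, rfl⟩, hxs⟩ := exists_lt_of_csInf_lt (hne.image _) hs
  exact hK hx ⟨⟨(hKX hx).1.1.trans hxs.le, hsb⟩, le_rfl, h₂⟩ hxs.le (hKX hx).2.1

theorem IsLowerRightIn.mk_mem_of_lt_sSup (hK : IsLowerRightIn (rect a₁ b₁ a₂ b₂) K)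
    (hKX : K ⊆ rect a₁ b₁ a₂ b₂) (hne : K.Nonempty) (h₁ : a₁ ≤ b₁) {t : ℝ}
    (hat : a₂ ≤ t) (ht : t < sSup (Prod.snd '' K)) : (b₁, t) ∈ K := by
  obtain ⟨_, ⟨x, hx, rfl⟩, htx⟩ := exists_lt_of_lt_csSup (hne.image _) ht
  exact hK hx ⟨⟨h₁, le_rfl⟩, hat, htx.le.trans (hKX hx).2.2⟩ (hKX hx).1.2 htx.le

end LowerRight

def muIntegrable (a₁ b₁ a₂ b₂ k : ℝ) (f : ℝ × ℝ → ℝ) : Submodule ℝ (ℝ × ℝ → ℝ) where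
  carrier := {g | IntervalIntegrable (fun s => g (s, a₂) * f (s, a₂)) volume a₁ b₁ ∧
    IntervalIntegrable (fun s => g (s, b₂) * f (s, b₂)) volume a₁ b₁ ∧
    IntervalIntegrable (fun s => g (b₁, s) * f (b₁, s)) volume a₂ b₂ ∧
    IntervalIntegrable (fun s => g (a₁, s) * f (a₁, s)) volume a₂ b₂ ∧
    IntegrableOn (fun x => g x * dens k f x) (rect a₁ b₁ a₂ b₂)}
  add_mem' := by
    rintro g h ⟨hg₁, hg₂, hg₃, hg₄, hg₅⟩ ⟨hh₁, hh₂, hh₃, hh₄, hh₅⟩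
    simp only [mem_ofPred_eq, Pi.add_apply, add_mul]
    exact ⟨hg₁.add hh₁, hg₂.add hh₂, hg₃.add hh₃, hg₄.add hh₄, hg₅.add hh₅⟩
  zero_mem' := by
    simp only [mem_ofPred_eq, Pi.zero_apply, zero_mul]
    exact ⟨intervalIntegrable_const, intervalIntegrable_const, intervalIntegrable_const,
      intervalIntegrable_const, integrableOn_zero⟩
  smul_mem' := by
    rintro c g ⟨hg₁, hg₂, hg₃, hg₄, hg₅⟩
    simp only [mem_ofPred_eq, Pi.smul_apply, smul_eq_mul, mul_assoc]
    exact ⟨hg₁.const_mul c, hg₂.const_mul c, hg₃.const_mul c, hg₄.const_mul c, hg₅.const_mul c⟩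

section muInt

variable {a₁ b₁ a₂ b₂ k p : ℝ} {f : ℝ × ℝ → ℝ}

open intervalIntegral in
/-- In `muInt` each `∫ s in _.._, …` extends to the end of the expression, so the four line
integrals are nested, and each inner one is integrated as a constant. -/
theorem muInt_eq {g : ℝ × ℝ → ℝ} (hg : g ∈ muIntegrable a₁ b₁ a₂ b₂ k f) :
    muInt a₁ b₁ a₂ b₂ k f g = g (a₁, a₂) - (a₂ + k) * ((∫ s in a₁..b₁, g (s, a₂) * f (s, a₂))
      + (b₁ - a₁) * (b₂ + k) * ((∫ s in a₁..b₁, g (s, b₂) * f (s, b₂))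
      + (b₁ - a₁) * b₁ * ((∫ s in a₂..b₂, g (b₁, s) * f (b₁, s))
      - (b₂ - a₂) * a₁ * ((∫ s in a₂..b₂, g (a₁, s) * f (a₁, s))
      - (b₂ - a₂) * ∫ x in rect a₁ b₁ a₂ b₂, g x * dens k f x)))) := by
  obtain ⟨hg₁, hg₂, hg₃, hg₄, -⟩ := hg
  rw [muInt, integral_add hg₁ intervalIntegrable_const, integral_add hg₂ intervalIntegrable_const,
    integral_sub hg₃ intervalIntegrable_const, integral_sub hg₄ intervalIntegrable_const]
  simp only [intervalIntegral.integral_const, smul_eq_mul]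
  ring

open intervalIntegral in
theorem muInt_add {g h : ℝ × ℝ → ℝ} (hg : g ∈ muIntegrable a₁ b₁ a₂ b₂ k f)
    (hh : h ∈ muIntegrable a₁ b₁ a₂ b₂ k f) :
    muInt a₁ b₁ a₂ b₂ k f (g + h) = muInt a₁ b₁ a₂ b₂ k f g + muInt a₁ b₁ a₂ b₂ k f h := by
  rw [muInt_eq hg, muInt_eq hh, muInt_eq (add_mem hg hh)]
  obtain ⟨hg₁, hg₂, hg₃, hg₄, hg₅⟩ := hg
  obtain ⟨hh₁, hh₂, hh₃, hh₄, hh₅⟩ := hh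
  simp only [Pi.add_apply, add_mul, integral_add hg₁ hh₁, integral_add hg₂ hh₂,
    integral_add hg₃ hh₃, integral_add hg₄ hh₄, MeasureTheory.integral_add hg₅ hh₅]
  ring

open intervalIntegral in
theorem muInt_smul (c : ℝ) {g : ℝ × ℝ → ℝ} (hg : g ∈ muIntegrable a₁ b₁ a₂ b₂ k f) :
    muInt a₁ b₁ a₂ b₂ k f (c • g) = c * muInt a₁ b₁ a₂ b₂ k f g := by
  rw [muInt_eq hg, muInt_eq (Submodule.smul_mem _ c hg)]
  simp only [Pi.smul_apply, smul_eq_mul, mul_assoc, intervalIntegral.integral_const_mul,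
    MeasureTheory.integral_const_mul]
  ring

variable (a₁ b₁ a₂ b₂ k f) in
noncomputable def muIntLinear : muIntegrable a₁ b₁ a₂ b₂ k f →ₗ[ℝ] ℝ where
  toFun g := muInt a₁ b₁ a₂ b₂ k f g
  map_add' g h := muInt_add g.2 h.2
  map_smul' c g := muInt_smul c g.2

theorem indicator_mem_muIntegrable (h₁ : a₁ ≤ b₁) (h₂ : a₂ ≤ b₂)
    (hf : ContinuousOn f (rect a₁ b₁ a₂ b₂)) (hd : ContinuousOn (dens k f) (rect a₁ b₁ a₂ b₂))
    {ψ : ℝ × ℝ → ℝ} (hψ : ContinuousOn ψ (rect a₁ b₁ a₂ b₂)) {A : Set (ℝ × ℝ)}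
    (hA : MeasurableSet A) : A.indicator ψ ∈ muIntegrable a₁ b₁ a₂ b₂ k f := by
  have edge {a b : ℝ} (hab : a ≤ b) {γ : ℝ → ℝ × ℝ} (hγ : Continuous γ)
      (hmaps : MapsTo γ (Icc a b) (rect a₁ b₁ a₂ b₂)) :
      IntervalIntegrable (fun s => A.indicator ψ (γ s) * f (γ s)) volume a b := by
    rw [← uIcc_of_le hab] at hmaps
    have := integrableOn_indicator_mul (μ := volume) isCompact_uIcc
      (hA.preimage hγ.measurable) (hψ.comp hγ.continuousOn hmaps) (hf.comp hγ.continuousOn hmaps)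
    simp only [indicator_comp_right, Function.comp_apply] at this
    exact this.intervalIntegrable
  refine ⟨edge h₁ (γ := fun s => (s, a₂)) (by fun_prop) fun s hs => ⟨hs, le_rfl, h₂⟩,
    edge h₁ (γ := fun s => (s, b₂)) (by fun_prop) fun s hs => ⟨hs, h₂, le_rfl⟩,
    edge h₂ (γ := fun s => (b₁, s)) (by fun_prop) fun s hs => ⟨⟨h₁, le_rfl⟩, hs⟩,
    edge h₂ (γ := fun s => (a₁, s)) (by fun_prop) fun s hs => ⟨⟨le_rfl, h₁⟩, hs⟩,
    integrableOn_indicator_mul (isCompact_Icc.prod isCompact_Icc) hA hψ hd⟩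

theorem muSet_union (h₁ : a₁ ≤ b₁) (h₂ : a₂ ≤ b₂) (hf : ContinuousOn f (rect a₁ b₁ a₂ b₂))
    (hd : ContinuousOn (dens k f) (rect a₁ b₁ a₂ b₂)) {A B : Set (ℝ × ℝ)} (hA : MeasurableSet A)
    (hB : MeasurableSet B) (hAB : Disjoint A B) :
    muSet a₁ b₁ a₂ b₂ k f (A ∪ B) = muSet a₁ b₁ a₂ b₂ k f A + muSet a₁ b₁ a₂ b₂ k f B := by
  rw [muSet, muSet, muSet, indicator_union_of_disjoint hAB]
  exact muInt_add (indicator_mem_muIntegrable h₁ h₂ hf hd continuousOn_const hA)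
    (indicator_mem_muIntegrable h₁ h₂ hf hd continuousOn_const hB)

variable (a₁ b₁ a₂ b₂ k f) in
theorem exists_abs_muInt_le : ∃ E, ∀ g ∈ muIntegrable a₁ b₁ a₂ b₂ k f, ∀ ε : ℝ,
    |g (a₁, a₂)| ≤ ε → |∫ s in a₁..b₁, g (s, a₂) * f (s, a₂)| ≤ ε →
    |∫ s in a₁..b₁, g (s, b₂) * f (s, b₂)| ≤ ε → |∫ s in a₂..b₂, g (b₁, s) * f (b₁, s)| ≤ ε →
    |∫ s in a₂..b₂, g (a₁, s) * f (a₁, s)| ≤ ε → |∫ x in rect a₁ b₁ a₂ b₂, g x * dens k f x| ≤ ε →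
    |muInt a₁ b₁ a₂ b₂ k f g| ≤ E * ε := by
  refine ⟨1 + |a₂ + k| * (1 + |(b₁ - a₁) * (b₂ + k)| * (1 + |(b₁ - a₁) * b₁| *
    (1 + |(b₂ - a₂) * a₁| * (1 + |b₂ - a₂| * 1)))), fun g hg ε h₀ h₁ h₂ h₃ h₄ h₅ => ?_⟩
  rw [muInt_eq hg]
  exact abs_sub_mul_le h₀ <| abs_add_mul_le h₁ <| abs_add_mul_le h₂ <| abs_sub_mul_le h₃ <|
    abs_sub_mul_le h₄ (M := 1) (by rwa [one_mul])

theorem exists_abs_muInt_le_of_abs_le (h₁ : a₁ ≤ b₁) (h₂ : a₂ ≤ b₂)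
    (hf : ContinuousOn f (rect a₁ b₁ a₂ b₂)) (hd : ContinuousOn (dens k f) (rect a₁ b₁ a₂ b₂)) :
    ∃ E, ∀ g ∈ muIntegrable a₁ b₁ a₂ b₂ k f, ∀ ε : ℝ, (∀ x ∈ rect a₁ b₁ a₂ b₂, |g x| ≤ ε) →
      |muInt a₁ b₁ a₂ b₂ k f g| ≤ E * ε := by
  obtain ⟨E, hE⟩ := exists_abs_muInt_le a₁ b₁ a₂ b₂ k f
  obtain ⟨Cf, -, hCf⟩ := exists_bound_rect h₁ h₂ hf
  obtain ⟨Cd, -, hCd⟩ := exists_bound_rect h₁ h₂ hd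
  set B := max (max (Cf * (b₁ - a₁)) (Cf * (b₂ - a₂)))
    (max (Cd * volume.real (rect a₁ b₁ a₂ b₂)) 1)
  refine ⟨E * B, fun g hg ε hgε => ?_⟩
  have hε : 0 ≤ ε := (abs_nonneg _).trans (hgε (a₁, a₂) ⟨⟨le_rfl, h₁⟩, le_rfl, h₂⟩)
  have hBε {L : ℝ} (hL : L ≤ B) : ε * L ≤ B * ε := by
    rw [mul_comm]; exact mul_le_mul_of_nonneg_right hL hε
  have horiz (y : ℝ) (hy : y ∈ Icc a₂ b₂) : |∫ s in a₁..b₁, g (s, y) * f (s, y)| ≤ B * ε := by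
    have := abs_intervalIntegral_mul_le h₁ (A := univ) (φ := fun s => g (s, y))
      (w := fun s => f (s, y)) (fun s hs => hgε _ ⟨Ioc_subset_Icc_self hs, hy⟩)
      (fun _ _ h => absurd trivial h) (fun s hs => hCf _ ⟨Ioc_subset_Icc_self hs, hy⟩)
    rw [inter_univ, Real.volume_real_Ioc_of_le h₁, mul_assoc] at this
    exact this.trans (hBε (by simp [B]))
  have vert (y : ℝ) (hy : y ∈ Icc a₁ b₁) : |∫ s in a₂..b₂, g (y, s) * f (y, s)| ≤ B * ε := by
    have := abs_intervalIntegral_mul_le h₂ (A := univ) (φ := fun s => g (y, s))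
      (w := fun s => f (y, s)) (fun s hs => hgε _ ⟨hy, Ioc_subset_Icc_self hs⟩)
      (fun _ _ h => absurd trivial h) (fun s hs => hCf _ ⟨hy, Ioc_subset_Icc_self hs⟩)
    rw [inter_univ, Real.volume_real_Ioc_of_le h₂, mul_assoc] at this
    exact this.trans (hBε (by simp [B]))
  have inner : |∫ x in rect a₁ b₁ a₂ b₂, g x * dens k f x| ≤ B * ε := by
    have := abs_setIntegral_mul_le (ν := volume) (A := univ)
      (measurableSet_Icc.prod measurableSet_Icc)
      (by rw [inter_univ]; exact (isCompact_Icc.prod isCompact_Icc).measure_lt_top)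
      hgε (fun _ _ h => absurd trivial h) hCd
    rw [inter_univ, mul_assoc] at this
    exact this.trans (hBε (by simp [B]))
  rw [mul_assoc]
  exact hE g hg _ ((hgε (a₁, a₂) ⟨⟨le_rfl, h₁⟩, le_rfl, h₂⟩).trans ((mul_one ε).symm.trans_le
    (hBε (by simp [B])))) (horiz a₂ ⟨le_rfl, h₂⟩) (horiz b₂ ⟨h₂, le_rfl⟩) (vert b₁ ⟨h₁, le_rfl⟩)
    (vert a₁ ⟨le_rfl, h₁⟩) inner

theorem exists_abs_muSet_strip_le (h₁ : a₁ ≤ b₁) (h₂ : a₂ ≤ b₂)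
    (hf : ContinuousOn f (rect a₁ b₁ a₂ b₂)) (hd : ContinuousOn (dens k f) (rect a₁ b₁ a₂ b₂))
    (hp : a₁ < p) (t : ℝ) :
    ∃ C, ∀ s ∈ Icc p b₁, |muSet a₁ b₁ a₂ b₂ k f (Ico p s ×ˢ Icc a₂ t)| ≤ C * (s - p) := by
  obtain ⟨E, hE⟩ := exists_abs_muInt_le a₁ b₁ a₂ b₂ k f
  obtain ⟨Cf, hCf0, hCf⟩ := exists_bound_rect h₁ h₂ hf
  obtain ⟨Cd, hCd0, hCd⟩ := exists_bound_rect h₁ h₂ hd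
  set C := Cf + Cd * (b₂ - a₂)
  have hC : 0 ≤ C := add_nonneg hCf0 (mul_nonneg hCd0 (sub_nonneg.2 h₂))
  refine ⟨E * C, fun s hs => ?_⟩
  set S := Ico p s ×ˢ Icc a₂ t
  have hsp : 0 ≤ s - p := sub_nonneg.2 hs.1
  have off_left (y : ℝ) : (a₁, y) ∉ S := fun h => absurd h.1.1 (not_le.2 hp)
  have off_right (y : ℝ) : (b₁, y) ∉ S := fun h => absurd h.1.2 (not_lt.2 hs.2)
  have horiz (y : ℝ) (hy : y ∈ Icc a₂ b₂) :
      |∫ σ in a₁..b₁, S.indicator (1 : ℝ × ℝ → ℝ) (σ, y) * f (σ, y)| ≤ C * (s - p) := by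
    have := abs_intervalIntegral_mul_le h₁ (A := Ico p s)
      (φ := fun σ => S.indicator (1 : ℝ × ℝ → ℝ) (σ, y)) (w := fun σ => f (σ, y))
      (fun σ _ => abs_indicator_one_le _ _) (fun σ _ hσ => indicator_of_notMem (fun h => hσ h.1) _)
      (fun σ hσ => hCf _ ⟨Ioc_subset_Icc_self hσ, hy⟩)
    have hvol : volume.real (Ioc a₁ b₁ ∩ Ico p s) ≤ s - p :=
      (measureReal_mono inter_subset_right measure_Ico_lt_top.ne).trans_eq
        (Real.volume_real_Ico_of_le hs.1)
    have := mul_nonneg hCd0 (sub_nonneg.2 h₂)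
    nlinarith
  have inner : |∫ x in rect a₁ b₁ a₂ b₂, S.indicator (1 : ℝ × ℝ → ℝ) x * dens k f x|
      ≤ C * (s - p) := by
    have := abs_setIntegral_mul_le (ν := volume) (R := rect a₁ b₁ a₂ b₂)
      (A := Ico p s ×ˢ Icc a₂ b₂)
      (measurableSet_Icc.prod measurableSet_Icc)
      ((measure_mono inter_subset_left).trans_lt (isCompact_Icc.prod isCompact_Icc).measure_lt_top)
      (fun x _ => abs_indicator_one_le _ _)
      (fun x hx hxA => indicator_of_notMem (fun (h : x ∈ S) => hxA ⟨h.1, hx.2⟩) _) hCd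
    have hvol : volume.real (rect a₁ b₁ a₂ b₂ ∩ Ico p s ×ˢ Icc a₂ b₂) ≤ (s - p) * (b₂ - a₂) :=
      (measureReal_mono inter_subset_right (by
        rw [Measure.volume_eq_prod, Measure.prod_prod]
        exact ENNReal.mul_ne_top measure_Ico_lt_top.ne measure_Icc_lt_top.ne)).trans_eq (by
        rw [Measure.volume_eq_prod, measureReal_prod_prod, Real.volume_real_Ico_of_le hs.1,
          Real.volume_real_Icc_of_le h₂])
    nlinarith
  have hε : 0 ≤ C * (s - p) := mul_nonneg hC hsp
  rw [muSet, mul_assoc]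
  refine hE (S.indicator 1) (indicator_mem_muIntegrable h₁ h₂ hf hd continuousOn_const
    (measurableSet_Ico.prod measurableSet_Icc)) _ ?_ (horiz a₂ ⟨le_rfl, h₂⟩)
    (horiz b₂ ⟨h₂, le_rfl⟩) ?_ ?_ inner
  · rwa [indicator_of_notMem (off_left a₂), abs_zero]
  · simpa only [indicator_of_notMem (off_right _), zero_mul, intervalIntegral.integral_zero,
      abs_zero] using hε
  · simpa only [indicator_of_notMem (off_left _), zero_mul, intervalIntegral.integral_zero,
      abs_zero] using hε

open Filter Topology in
theorem muSet_orthant_nonneg (h₁ : a₁ ≤ b₁) (h₂ : a₂ ≤ b₂)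
    (hf : ContinuousOn f (rect a₁ b₁ a₂ b₂)) (hd : ContinuousOn (dens k f) (rect a₁ b₁ a₂ b₂))
    (hp : a₁ < p) (hpb : p < b₁)
    (horth : ∀ x ∈ Wgo a₁ b₁ a₂ b₂ p, 0 ≤ muSet a₁ b₁ a₂ b₂ k f (Icc x.1 b₁ ×ˢ Icc a₂ x.2))
    {s t : ℝ} (hs : s ∈ Icc p b₁) (ht : t ∈ Icc a₂ b₂) :
    0 ≤ muSet a₁ b₁ a₂ b₂ k f (Icc s b₁ ×ˢ Icc a₂ t) := by
  obtain rfl | hps := hs.1.eq_or_lt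
  · obtain ⟨C, hC⟩ := exists_abs_muSet_strip_le (k := k) h₁ h₂ hf hd hp t
    have hsplit (s' : ℝ) (hs' : s' ∈ Ioc p b₁) :
        -(C * (s' - p)) ≤ muSet a₁ b₁ a₂ b₂ k f (Icc p b₁ ×ˢ Icc a₂ t) := by
      have hdisj : Disjoint (Ico p s' ×ˢ Icc a₂ t) (Icc s' b₁ ×ˢ Icc a₂ t) :=
        disjoint_prod.2 (Or.inl (disjoint_left.2 fun _ hx hx' => (not_le.2 hx.2) hx'.1))
      rw [← Ico_union_Icc_eq_Icc hs'.1.le hs'.2, union_prod,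
        muSet_union h₁ h₂ hf hd (measurableSet_Ico.prod measurableSet_Icc)
          (measurableSet_Icc.prod measurableSet_Icc) hdisj]
      have := horth (s', t) ⟨⟨⟨(hp.trans hs'.1).le, hs'.2⟩, ht⟩, hs'.1⟩
      linarith [(abs_le.1 (hC s' ⟨hs'.1.le, hs'.2⟩)).1]
    have hcont : Continuous fun s' => -(C * (s' - p)) := by fun_prop
    have hlim : Tendsto (fun s' => -(C * (s' - p))) (𝓝[>] p) (𝓝 0) :=
      tendsto_nhdsWithin_of_tendsto_nhds (hcont.tendsto' p 0 (by simp))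
    exact le_of_tendsto hlim (eventually_of_mem (Ioc_mem_nhdsGT hpb) hsplit)
  · exact horth (s, t) ⟨⟨⟨(hp.trans hps).le, hs.2⟩, ht⟩, hps⟩

theorem muSet_nonpos (ha₁ : 0 ≤ a₁) (h₁ : a₁ ≤ b₁) (h₂ : a₂ ≤ b₂) (hkb : k ≤ -b₂)
    (hfpos : ∀ s ∈ Icc a₁ b₁, 0 ≤ f (s, b₂)) (hMM : ∀ x ∈ rect a₁ b₁ a₂ b₂, 0 ≤ dens k f x)
    {D : Set (ℝ × ℝ)} (hD : D.indicator 1 ∈ muIntegrable a₁ b₁ a₂ b₂ k f)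
    (hleft : ∀ s, (a₁, s) ∉ D) (hbottom : ∀ᵐ s, (s, a₂) ∉ D) (hright : ∀ᵐ s, (b₁, s) ∉ D) :
    muSet a₁ b₁ a₂ b₂ k f D ≤ 0 := by
  have hind : ∀ x, 0 ≤ D.indicator (1 : ℝ × ℝ → ℝ) x := indicator_nonneg fun _ _ => zero_le_one
  have hbottom' : ∫ s in a₁..b₁, D.indicator 1 (s, a₂) * f (s, a₂) = 0 :=
    intervalIntegral.integral_zero_ae (hbottom.mono fun s hs _ => by
      rw [indicator_of_notMem hs, zero_mul])
  have hright' : ∫ s in a₂..b₂, D.indicator 1 (b₁, s) * f (b₁, s) = 0 :=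
    intervalIntegral.integral_zero_ae (hright.mono fun s hs _ => by
      rw [indicator_of_notMem hs, zero_mul])
  rw [muSet, muInt_eq hD, indicator_of_notMem (hleft a₂), hbottom', hright']
  simp only [indicator_of_notMem (hleft _), zero_mul, intervalIntegral.integral_zero]
  set top := ∫ s in a₁..b₁, D.indicator 1 (s, b₂) * f (s, b₂)
  set inner := ∫ x in rect a₁ b₁ a₂ b₂, D.indicator 1 x * dens k f x
  have htop : 0 ≤ top :=
    intervalIntegral.integral_nonneg h₁ fun s hs => mul_nonneg (hind _) (hfpos s hs)
  have hinner : 0 ≤ inner :=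
    setIntegral_nonneg (measurableSet_Icc.prod measurableSet_Icc) fun x hx =>
      mul_nonneg (hind _) (hMM x hx)
  have hcoef : 0 ≤ (a₂ + k) * (b₂ + k) * (b₁ - a₁) :=
    mul_nonneg (mul_nonneg_of_nonpos_of_nonpos (by linarith) (by linarith)) (sub_nonneg.2 h₁)
  calc _ = -((a₂ + k) * (b₂ + k) * (b₁ - a₁)) *
        (top + (b₁ - a₁) * b₁ * (b₂ - a₂) ^ 2 * a₁ * inner) := by ring
    _ ≤ 0 := mul_nonpos_of_nonpos_of_nonneg (neg_nonpos.2 hcoef) (by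
        have := mul_nonneg (mul_nonneg (mul_nonneg (mul_nonneg (sub_nonneg.2 h₁)
          (ha₁.trans h₁)) (sq_nonneg (b₂ - a₂))) ha₁) hinner
        linarith)

theorem muSet_nonneg_of_isLowerRightIn (ha₁ : 0 ≤ a₁) (hp : a₁ < p) (h₂ : a₂ ≤ b₂)
    (hkb : k ≤ -b₂) (hf : ContinuousOn f (rect a₁ b₁ a₂ b₂))
    (hd : ContinuousOn (dens k f) (rect a₁ b₁ a₂ b₂))
    (hfpos : ∀ s ∈ Icc a₁ b₁, 0 ≤ f (s, b₂)) (hMM : ∀ x ∈ rect a₁ b₁ a₂ b₂, 0 ≤ dens k f x)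
    (horth : ∀ x ∈ Wgo a₁ b₁ a₂ b₂ p, 0 ≤ muSet a₁ b₁ a₂ b₂ k f (Icc x.1 b₁ ×ˢ Icc a₂ x.2))
    {K : Set (ℝ × ℝ)} (hKm : MeasurableSet K) (hKW : K ⊆ Wgo a₁ b₁ a₂ b₂ p)
    (hK : IsLowerRightIn (rect a₁ b₁ a₂ b₂) K) : 0 ≤ muSet a₁ b₁ a₂ b₂ k f K := by
  obtain rfl | ⟨z, hz⟩ := K.eq_empty_or_nonempty
  · simp [muSet, muInt]
  have hKX : K ⊆ rect a₁ b₁ a₂ b₂ := fun x hx => (hKW hx).1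
  have hpb : p < b₁ := (hKW hz).2.trans_le (hKX hz).1.2
  have h₁ : a₁ ≤ b₁ := (hp.trans hpb).le
  set s₀ := sInf (Prod.fst '' K)
  set t₁ := sSup (Prod.snd '' K)
  set O := Icc s₀ b₁ ×ˢ Icc a₂ t₁
  have hKO : K ⊆ O := subset_Icc_sInf_prod_Icc_sSup hKX
  have hps₀ : p ≤ s₀ := le_csInf ⟨z.1, mem_image_of_mem _ hz⟩ (by
    rintro _ ⟨x, hx, rfl⟩; exact (hKW hx).2.le)
  have ht₁ : t₁ ≤ b₂ := csSup_le ⟨z.2, mem_image_of_mem _ hz⟩ (by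
    rintro _ ⟨x, hx, rfl⟩; exact (hKX hx).2.2)
  have hO : 0 ≤ muSet a₁ b₁ a₂ b₂ k f O :=
    muSet_orthant_nonneg h₁ h₂ hf hd hp hpb horth ⟨hps₀, (hKO hz).1.1.trans (hKO hz).1.2⟩
      ⟨(hKO hz).2.1.trans (hKO hz).2.2, ht₁⟩
  have hOm : MeasurableSet O := measurableSet_Icc.prod measurableSet_Icc
  have hsplit : muSet a₁ b₁ a₂ b₂ k f O =
      muSet a₁ b₁ a₂ b₂ k f K + muSet a₁ b₁ a₂ b₂ k f (O \ K) := by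
    rw [← muSet_union h₁ h₂ hf hd hKm (hOm.diff hKm) disjoint_sdiff_right, union_sdiff_cancel hKO]
  have hD : muSet a₁ b₁ a₂ b₂ k f (O \ K) ≤ 0 := by
    refine muSet_nonpos ha₁ h₁ h₂ hkb hfpos hMM
      (indicator_mem_muIntegrable h₁ h₂ hf hd continuousOn_const (hOm.diff hKm))
      (fun s h => (hp.trans_le hps₀).not_ge h.1.1.1) ?_ ?_
    · filter_upwards [volume.ae_ne s₀] with s hs h
      exact h.2 (hK.mk_mem_of_sInf_lt hKX ⟨z, hz⟩ h₂ (h.1.1.1.lt_of_ne' hs) h.1.1.2)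
    · filter_upwards [volume.ae_ne t₁] with t ht h
      exact h.2 (hK.mk_mem_of_lt_sSup hKX ⟨z, hz⟩ h₁ h.1.2.1 (h.1.2.2.lt_of_ne ht))
  linarith

theorem muInt_indicator_Wgo_nonneg (ha₁ : 0 ≤ a₁) (hp : p ∈ Ioc a₁ b₁) (h₂ : a₂ ≤ b₂)
    (hkb : k ≤ -b₂) (hf : ContinuousOn f (rect a₁ b₁ a₂ b₂))
    (hd : ContinuousOn (dens k f) (rect a₁ b₁ a₂ b₂))
    (hfpos : ∀ s ∈ Icc a₁ b₁, 0 ≤ f (s, b₂)) (hMM : ∀ x ∈ rect a₁ b₁ a₂ b₂, 0 ≤ dens k f x)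
    (horth : ∀ x ∈ Wgo a₁ b₁ a₂ b₂ p, 0 ≤ muSet a₁ b₁ a₂ b₂ k f (Icc x.1 b₁ ×ˢ Icc a₂ x.2))
    {u : ℝ × ℝ → ℝ} (huc : ContinuousOn u (rect a₁ b₁ a₂ b₂))
    (hu₁ : DecAlong1 (rect a₁ b₁ a₂ b₂) u) (hu₂ : IncAlong2 (rect a₁ b₁ a₂ b₂) u) :
    0 ≤ muInt a₁ b₁ a₂ b₂ k f ((Wgo a₁ b₁ a₂ b₂ p).indicator fun x => u (p, b₂) - u x) := by
  have h₁ : a₁ ≤ b₁ := hp.1.le.trans hp.2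
  set W := Wgo a₁ b₁ a₂ b₂ p
  set G := W.indicator fun x => u (p, b₂) - u x
  have hW : MeasurableSet W := measurableSet_Wgo a₁ b₁ a₂ b₂ p
  have hgc : ContinuousOn (fun x => u (p, b₂) - u x) (rect a₁ b₁ a₂ b₂) :=
    continuousOn_const.sub huc
  have hGm : Measurable G := by
    classical
    rw [show G = W.piecewise (fun x => u (p, b₂) - u x) 0 from piecewise_eq_indicator.symm]
    exact (hgc.mono fun x hx => hx.1).measurable_piecewise continuousOn_const hW
  have hpX : (p, b₂) ∈ rect a₁ b₁ a₂ b₂ := ⟨⟨hp.1.le, hp.2⟩, h₂, le_rfl⟩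
  have hu_le {x} (hx : x ∈ W) : u x ≤ u (p, b₂) := by
    have hpx : (p, x.2) ∈ rect a₁ b₁ a₂ b₂ := ⟨⟨hp.1.le, hp.2⟩, hx.1.2⟩
    exact (hu₁ p x.1 x.2 hpx hx.1 hx.2.le).trans (hu₂ p x.2 b₂ hpx hpX hx.1.2.2)
  have hlevel {t : ℝ} (ht : 0 ≤ t) : {x | t < G x} = {x ∈ W | u x < u (p, b₂) - t} := by
    ext x
    by_cases hx : x ∈ W
    · simp only [G, indicator_of_mem hx, mem_ofPred_eq, hx, true_and]
      constructor <;> intro <;> linarith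
    · simp only [G, indicator_of_notMem hx, mem_ofPred_eq, hx, false_and, iff_false, not_lt, ht]
  obtain ⟨E, hE⟩ := exists_abs_muInt_le_of_abs_le h₁ h₂ hf hd
  obtain ⟨Cu, hCu0, hCu⟩ := exists_bound_rect h₁ h₂ huc
  refine (muIntLinear a₁ b₁ a₂ b₂ k f).nonneg_of_superlevelSet_nonneg
    (fun φ ε hφ => hE φ φ.2 ε fun x _ => hφ x) ⟨G, indicator_mem_muIntegrable h₁ h₂ hf hd hgc hW⟩
    (M := 2 * Cu) (fun x => ?_)
    (fun t => indicator_mem_muIntegrable h₁ h₂ hf hd continuousOn_const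
      (measurableSet_lt measurable_const hGm)) fun t ht => ?_
  · by_cases hx : x ∈ W
    · have := abs_le.1 (hCu x hx.1)
      have := abs_le.1 (hCu _ hpX)
      simp only [G, indicator_of_mem hx]
      constructor <;> linarith [hu_le hx]
    · simp [G, indicator_of_notMem hx, hCu0]
  · change 0 ≤ muSet a₁ b₁ a₂ b₂ k f {x | t < G x}
    rw [hlevel ht]
    exact muSet_nonneg_of_isLowerRightIn ha₁ hp.1 h₂ hkb hf hd hfpos hMM horth
      (hlevel ht ▸ measurableSet_lt measurable_const hGm) (fun x hx => hx.1)
      (isLowerRightIn_sublevel hu₁ hu₂ p _)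

end muInt

theorem stmt9_general
    (a₁ b₁ a₂ b₂ : ℝ) (ha₁ : 0 ≤ a₁) (hab₁ : a₁ < b₁) (hab₂ : a₂ < b₂)
    (U : Set (ℝ × ℝ)) (hU : IsOpen U) (hXU : rect a₁ b₁ a₂ b₂ ⊆ U)
    (f : ℝ × ℝ → ℝ) (hf : ContDiffOn ℝ 1 f U)
    (hfpos : ∀ x ∈ rect a₁ b₁ a₂ b₂, 0 < f x)
    (k : ℝ)
    (hMM : ∀ x ∈ rect a₁ b₁ a₂ b₂, 0 ≤ dens k f x)
    (p : ℝ) (hp : p ∈ Ioc a₁ b₁)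
    (hkb : k ≤ -b₂)
    (hW0 : muSet a₁ b₁ a₂ b₂ k f (Wgo a₁ b₁ a₂ b₂ p) = 0)
    (horth : ∀ x ∈ Wgo a₁ b₁ a₂ b₂ p,
      0 ≤ muSet a₁ b₁ a₂ b₂ k f (Icc x.1 b₁ ×ˢ Icc a₂ x.2))
    (u : ℝ × ℝ → ℝ)
    (huc : ContinuousOn u (rect a₁ b₁ a₂ b₂))
    (hu1 : DecAlong1 (rect a₁ b₁ a₂ b₂) u) (hu2 : IncAlong2 (rect a₁ b₁ a₂ b₂) u) :
    muInt a₁ b₁ a₂ b₂ k f ((Wgo a₁ b₁ a₂ b₂ p).indicator u) ≤ 0 := by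
  have hfX : ContinuousOn f (rect a₁ b₁ a₂ b₂) := hf.continuousOn.mono hXU
  have hdX : ContinuousOn (dens k f) (rect a₁ b₁ a₂ b₂) := (continuousOn_dens hU hf k).mono hXU
  set W := Wgo a₁ b₁ a₂ b₂ p
  set g : ℝ × ℝ → ℝ := fun x => u (p, b₂) - u x
  have h1W : W.indicator 1 ∈ muIntegrable a₁ b₁ a₂ b₂ k f :=
    indicator_mem_muIntegrable hab₁.le hab₂.le hfX hdX continuousOn_const
      (measurableSet_Wgo a₁ b₁ a₂ b₂ p)
  have hgW : W.indicator g ∈ muIntegrable a₁ b₁ a₂ b₂ k f :=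
    indicator_mem_muIntegrable hab₁.le hab₂.le hfX hdX (continuousOn_const.sub huc)
      (measurableSet_Wgo a₁ b₁ a₂ b₂ p)
  have hsplit : W.indicator u = u (p, b₂) • W.indicator 1 + (-1 : ℝ) • W.indicator g := by
    ext x
    by_cases hx : x ∈ W <;> simp [hx, g]
  have hg : 0 ≤ muInt a₁ b₁ a₂ b₂ k f (W.indicator g) :=
    muInt_indicator_Wgo_nonneg ha₁ hp hab₂.le hkb hfX hdX
      (fun s hs => (hfpos _ ⟨hs, hab₂.le, le_rfl⟩).le) hMM horth huc hu1 hu2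
  rw [hsplit, muInt_add (Submodule.smul_mem _ _ h1W) (Submodule.smul_mem _ _ hgW),
    muInt_smul _ h1W, muInt_smul _ hgW, ← muSet, hW0]
  linarith

/-- Dominance condition on `W` in the proof of Theorem 1. -/
theorem stmt9
    (a₁ b₁ a₂ b₂ : ℝ) (ha₁ : 0 ≤ a₁) (hab₁ : a₁ < b₁) (hab₂ : a₂ < b₂) (hb₂ : b₂ ≤ 0)
    (U : Set (ℝ × ℝ)) (hU : IsOpen U) (hXU : rect a₁ b₁ a₂ b₂ ⊆ U)
    (f : ℝ × ℝ → ℝ) (hf : ContDiffOn ℝ 1 f U)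
    (hfbd : ∃ C, ∀ x ∈ U, |d1 f x| ≤ C ∧ |d2 f x| ≤ C)
    (hfpos : ∀ x ∈ rect a₁ b₁ a₂ b₂, 0 < f x)
    (hfint : (∫ x in rect a₁ b₁ a₂ b₂, f x) = 1)
    (k : ℝ) (hk : 0 ≤ k)
    (hMM : ∀ x ∈ rect a₁ b₁ a₂ b₂, 0 ≤ dens k f x)
    (p : ℝ) (hp : p ∈ Ioc a₁ b₁)
    (hkb : k ≤ -b₂)
    (hW0 : muSet a₁ b₁ a₂ b₂ k f (Wgo a₁ b₁ a₂ b₂ p) = 0)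
    (horth : ∀ x ∈ Wgo a₁ b₁ a₂ b₂ p,
      0 ≤ muSet a₁ b₁ a₂ b₂ k f (Icc x.1 b₁ ×ˢ Icc a₂ x.2))
    (u : ℝ × ℝ → ℝ)
    (huc : ContinuousOn u (rect a₁ b₁ a₂ b₂)) (huconv : ConvexOn ℝ (rect a₁ b₁ a₂ b₂) u)
    (hu1 : DecAlong1 (rect a₁ b₁ a₂ b₂) u) (hu2 : IncAlong2 (rect a₁ b₁ a₂ b₂) u) :
    muInt a₁ b₁ a₂ b₂ k f ((Wgo a₁ b₁ a₂ b₂ p).indicator u) ≤ 0 :=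
  stmt9_general a₁ b₁ a₂ b₂ ha₁ hab₁ hab₂ U hU hXU f hf hfpos k hMM p hp hkb hW0 horth u huc hu1 hu2
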